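/- Let f: S → ℝ be the function f(X) = −log det X + tr(X Σ̂) on the open cone S of symmetric positive definite n×n matrices, with Σ̂ ≻ 0. Then f(X) → +∞ as ‖X‖ → ∞ within S; consequently f attains its infimum on S. -/

import Mathlib

/-!
Choose `c > 0` with `Σ̂ - c • 1 ⪰ 0`. Since the trace of a product of positive semidefinite
matrices is nonnegative, `tr (X Σ̂) ≥ c tr X` for `X ⪰ 0`; moreover `‖X‖ ≤ tr X` and
`det X ≤ (tr X) ^ n`. Hence `f X ≥ c t - n log t` with `t = tr X ≥ ‖X‖`, which tends to `+∞`.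

For the minimum, `tr (X Σ̂) ≥ 0` gives `det X ≥ exp (-f X)`, so the sublevel set `{f ≤ f 1}` lies
in the closed set `K = {X ⪰ 0 | det X ≥ exp (-f 1)}` of positive definite matrices. On `K` the
function `f` is continuous and coercive, so it attains its minimum there, and that minimum is
global on the positive definite cone.
-/

open Matrix Filter

attribute [local instance] Matrix.normedAddCommGroup

open scoped MatrixOrder ComplexOrder Asymptotics

namespace Matrix

theorem PosDef.isSymm {n : Type*} {X : Matrix n n ℝ} (hX : X.PosDef) : X.IsSymm :=
  hX.isHermitian

variable {𝕜 n : Type*} [RCLike 𝕜] [Fintype n]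

theorem isClosed_setOf_posSemidef : IsClosed {X : Matrix n n 𝕜 | X.PosSemidef} := by
  simp only [posSemidef_iff_dotProduct_mulVec, Set.ofPred_and, Set.ofPred_forall]
  refine .inter (isClosed_eq (by fun_prop) continuous_id) (isClosed_iInter fun x => ?_)
  exact isClosed_le continuous_const (by simp only [dotProduct, mulVec]; fun_prop)

variable [DecidableEq n]

theorem PosSemidef.trace_mul_nonneg {A B : Matrix n n 𝕜} (hA : A.PosSemidef)
    (hB : B.PosSemidef) : 0 ≤ (A * B).trace := by
  set S := CFC.sqrt A
  have hS : S.PosSemidef := (CFC.sqrt_nonneg A).posSemidef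
  have hSS : S * S = A := CFC.sqrt_mul_sqrt_self A hA.nonneg
  calc (0 : 𝕜) ≤ (Sᴴ * B * S).trace := (hB.conjTranspose_mul_mul_same S).trace_nonneg
    _ = (A * B).trace := by rw [hS.isHermitian.eq, trace_mul_cycle, hSS]

theorem PosDef.exists_pos_posSemidef_sub_smul_one {A : Matrix n n 𝕜} (hA : A.PosDef) :
    ∃ c : ℝ, 0 < c ∧ (A - c • (1 : Matrix n n 𝕜)).PosSemidef := by
  cases subsingleton_or_nontrivial (Matrix n n 𝕜)
  · exact ⟨1, one_pos, Subsingleton.elim 0 (A - (1 : ℝ) • 1) ▸ PosSemidef.zero⟩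
  obtain ⟨c, hc, hle⟩ := (CFC.exists_pos_algebraMap_le_iff hA.isHermitian.isSelfAdjoint).2
    fun x hx => hA.isStrictlyPositive.spectrum_pos hx
  exact ⟨c, hc, by rwa [Algebra.algebraMap_eq_smul_one, le_iff] at hle⟩

variable {A X : Matrix n n ℝ}

theorem PosDef.exists_pos_mul_trace_le_trace_mul (hA : A.PosDef) :
    ∃ c : ℝ, 0 < c ∧ ∀ X : Matrix n n ℝ, X.PosSemidef → c * X.trace ≤ (X * A).trace := by
  obtain ⟨c, hc, hAc⟩ := hA.exists_pos_posSemidef_sub_smul_one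
  refine ⟨c, hc, fun X hX => ?_⟩
  have := hX.trace_mul_nonneg hAc
  rw [mul_sub, trace_sub, mul_smul_comm, mul_one, trace_smul, smul_eq_mul] at this
  linarith

theorem PosSemidef.abs_apply_le_trace (hX : X.PosSemidef) (i j : n) : |X i j| ≤ X.trace := by
  have hform (s : ℝ) : 0 ≤ X i i + 2 * s * X i j + s ^ 2 * X j j := by
    have := hX.dotProduct_mulVec_nonneg (Pi.single i 1 + s • Pi.single j 1)
    have hji : X j i = X i j := by simpa using hX.isHermitian.apply i j
    simp only [star_trivial, mulVec_add, mulVec_single, MulOpposite.op_one, one_smul, mulVec_smul,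
      dotProduct_add, add_dotProduct, single_dotProduct, col_apply, one_mul, smul_dotProduct, hji,
      smul_eq_mul, dotProduct_smul] at this
    linear_combination this
  have hdiag (k : n) : X k k ≤ X.trace :=
    Finset.single_le_sum (f := fun k => X k k) (fun _ _ => hX.diag_nonneg) (Finset.mem_univ k)
  rw [abs_le]
  constructor <;> linarith [hform 1, hform (-1), hdiag i, hdiag j]

theorem PosSemidef.norm_le_trace (hX : X.PosSemidef) : ‖X‖ ≤ X.trace :=
  (norm_le_iff hX.trace_nonneg).2 fun i j => hX.abs_apply_le_trace i j

theorem PosSemidef.det_le_trace_pow (hX : X.PosSemidef) : X.det ≤ X.trace ^ Fintype.card n := by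
  rw [hX.isHermitian.det_eq_prod_eigenvalues, hX.isHermitian.trace_eq_sum_eigenvalues,
    ← Finset.card_univ, ← Finset.prod_const]
  exact Finset.prod_le_prod (fun i _ => hX.eigenvalues_nonneg i) fun i _ =>
    Finset.single_le_sum (fun j _ => hX.eigenvalues_nonneg j) (Finset.mem_univ i)

end Matrix

theorem tendsto_mul_sub_mul_log_atTop {c : ℝ} (hc : 0 < c) (a : ℝ) :
    Tendsto (fun t => c * t - a * Real.log t) atTop atTop := by
  have h : (fun t => c * t - a * Real.log t) ~[atTop] (fun t => c * t) :=
    Asymptotics.IsEquivalent.refl.sub_isLittleO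
      ((Real.isLittleO_log_id_atTop.const_mul_left a).const_mul_right hc.ne')
  exact h.symm.tendsto_atTop (tendsto_id.const_mul_atTop hc)

section NegLogDetAddTrace

variable {n : Type*} [Fintype n] [DecidableEq n] {Sig : Matrix n n ℝ}

noncomputable def negLogDetAddTrace (Sig X : Matrix n n ℝ) : ℝ :=
  -Real.log X.det + (X * Sig).trace

theorem mul_trace_sub_mul_log_trace_le_negLogDetAddTrace {c : ℝ}
    (hc : ∀ X : Matrix n n ℝ, X.PosSemidef → c * X.trace ≤ (X * Sig).trace)
    {X : Matrix n n ℝ} (hX : X.PosDef) :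
    c * X.trace - Fintype.card n * Real.log X.trace ≤ negLogDetAddTrace Sig X := by
  have hlog : Real.log X.det ≤ Fintype.card n * Real.log X.trace := by
    rw [← Real.log_pow]
    exact Real.log_le_log hX.det_pos hX.posSemidef.det_le_trace_pow
  rw [negLogDetAddTrace]
  linarith [hc X hX.posSemidef]

theorem tendsto_negLogDetAddTrace (hSig : Sig.PosDef) :
    Tendsto (negLogDetAddTrace Sig) (comap norm atTop ⊓ 𝓟 {X | X.PosDef}) atTop := by
  obtain ⟨c, hc, hcSig⟩ := hSig.exists_pos_mul_trace_le_trace_mul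
  have htrace : Tendsto trace (comap norm atTop ⊓ 𝓟 {X : Matrix n n ℝ | X.PosDef}) atTop :=
    tendsto_atTop_mono' _
      (eventually_inf_principal.2 (.of_forall fun X hX => hX.posSemidef.norm_le_trace))
      (tendsto_comap.mono_left inf_le_left)
  exact tendsto_atTop_mono' _ (eventually_inf_principal.2 (.of_forall fun _ hX =>
      mul_trace_sub_mul_log_trace_le_negLogDetAddTrace hcSig hX))
    ((tendsto_mul_sub_mul_log_atTop hc _).comp htrace)

theorem exp_neg_negLogDetAddTrace_le_det (hSig : Sig.PosSemidef) {X : Matrix n n ℝ}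
    (hX : X.PosDef) : Real.exp (-negLogDetAddTrace Sig X) ≤ X.det := by
  calc Real.exp (-negLogDetAddTrace Sig X) ≤ Real.exp (Real.log X.det) := by
        rw [negLogDetAddTrace]
        gcongr
        linarith [hX.posSemidef.trace_mul_nonneg hSig]
    _ = X.det := Real.exp_log hX.det_pos

theorem exists_isMinOn_negLogDetAddTrace (hSig : Sig.PosDef) :
    ∃ X₀ : Matrix n n ℝ, X₀.PosDef ∧ IsMinOn (negLogDetAddTrace Sig) {X | X.PosDef} X₀ := by
  set f := negLogDetAddTrace Sig
  set K := {X : Matrix n n ℝ | X.PosSemidef ∧ Real.exp (-f 1) ≤ X.det}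
  have hKpos : ∀ X ∈ K, X.PosDef := fun X hX =>
    hX.1.posDef_iff_det_ne_zero.2 ((Real.exp_pos _).trans_le hX.2).ne'
  have h1K : (1 : Matrix n n ℝ) ∈ K :=
    ⟨.one, exp_neg_negLogDetAddTrace_le_det hSig.posSemidef .one⟩
  have hKclosed : IsClosed K :=
    isClosed_setOf_posSemidef.inter (isClosed_le continuous_const continuous_id.matrix_det)
  have hKf : ContinuousOn f K := fun X hX =>
    ((continuous_id.matrix_det.continuousAt.log (hKpos X hX).det_pos.ne').neg.add
      (continuous_id.matrix_mul continuous_const).matrix_trace.continuousAt).continuousWithinAt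
  have hKcoercive : ∀ᶠ X in cocompact _ ⊓ 𝓟 K, f 1 ≤ f X := by
    -- the sup norm is only a local instance, so properness is read off the underlying Pi type
    have : ProperSpace (Matrix n n ℝ) := inferInstanceAs (ProperSpace (n → n → ℝ))
    refine ((tendsto_negLogDetAddTrace hSig).eventually_ge_atTop (f 1)).filter_mono
      (inf_le_inf (le_of_eq ?_) (principal_mono.2 hKpos))
    rw [comap_norm_atTop, Metric.cobounded_eq_cocompact]
    rfl
  obtain ⟨X₀, hX₀K, hmin⟩ := hKf.exists_isMinOn' hKclosed h1K hKcoercive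
  refine ⟨X₀, hKpos X₀ hX₀K, fun X (hX : X.PosDef) => ?_⟩
  by_cases hX1 : f X ≤ f 1
  · exact hmin ⟨hX.posSemidef, (Real.exp_le_exp.2 (neg_le_neg hX1)).trans
      (exp_neg_negLogDetAddTrace_le_det hSig.posSemidef hX)⟩
  · exact (hmin h1K).trans (le_of_not_ge hX1)

end NegLogDetAddTrace

theorem neg_log_det_add_trace_coercive_and_attains_min_general
    (n : ℕ) (Sighat : Matrix (Fin n) (Fin n) ℝ)
    (hpd : Sighat.PosDef) :
    Tendsto (fun X : Matrix (Fin n) (Fin n) ℝ =>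
        -Real.log X.det + Matrix.trace (X * Sighat))
      ((Filter.comap norm atTop) ⊓
        Filter.principal {X : Matrix (Fin n) (Fin n) ℝ | X.IsSymm ∧ X.PosDef})
      atTop ∧
    ∃ X₀ : Matrix (Fin n) (Fin n) ℝ, (X₀.IsSymm ∧ X₀.PosDef) ∧
      ∀ X : Matrix (Fin n) (Fin n) ℝ, X.IsSymm → X.PosDef →
        -Real.log X₀.det + Matrix.trace (X₀ * Sighat)
          ≤ -Real.log X.det + Matrix.trace (X * Sighat) := by
  have hcone : {X : Matrix (Fin n) (Fin n) ℝ | X.IsSymm ∧ X.PosDef} = {X | X.PosDef} :=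
    Set.ext fun _ => and_iff_right_of_imp PosDef.isSymm
  obtain ⟨X₀, hX₀, hmin⟩ := exists_isMinOn_negLogDetAddTrace hpd
  exact ⟨hcone ▸ tendsto_negLogDetAddTrace hpd, X₀, ⟨hX₀.isSymm, hX₀⟩, fun X _ hX => hmin hX⟩

/-- On the open cone `S` of symmetric positive definite matrices, with
`Σ̂ ≻ 0`, the function `f(X) = -log det X + tr(X Σ̂)` tends to `+∞` as
`‖X‖ → ∞` within `S`; consequently `f` attains its infimum on `S`. -/
theorem neg_log_det_add_trace_coercive_and_attains_min
    (n : ℕ) (Sighat : Matrix (Fin n) (Fin n) ℝ)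
    (hsymm : Sighat.IsSymm) (hpd : Sighat.PosDef) :
    Tendsto (fun X : Matrix (Fin n) (Fin n) ℝ =>
        -Real.log X.det + Matrix.trace (X * Sighat))
      ((Filter.comap norm atTop) ⊓
        Filter.principal {X : Matrix (Fin n) (Fin n) ℝ | X.IsSymm ∧ X.PosDef})
      atTop ∧
    ∃ X₀ : Matrix (Fin n) (Fin n) ℝ, (X₀.IsSymm ∧ X₀.PosDef) ∧
      ∀ X : Matrix (Fin n) (Fin n) ℝ, X.IsSymm → X.PosDef →
        -Real.log X₀.det + Matrix.trace (X₀ * Sighat)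
          ≤ -Real.log X.det + Matrix.trace (X * Sighat) :=
  neg_log_det_add_trace_coercive_and_attains_min_general n Sighat hpd
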